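/- Let (X, π) be a weighted n-partite simplicial complex with n ≥ 2, let μ be any probability distribution on the top faces Ω, and let x ∈ Ω[{1}] be a value of the first coordinate with positive (μ·Q₁)_{{1}} mass. Then the conditional distribution of μ·Psq given that the first coordinate equals x satisfies (μ·Psq)^{(x)} = (μ·Q₁)^{(x)} · Psq^{(x)}, where Psq = Q₁⋯Qₙ, (ν)^{(x)} denotes the distribution ν conditioned on the first coordinate being x (viewed as a distribution on the pinned set Ω_x of tuples in coordinates 2,…,n), and Psq^{(x)} = Q₂^{(x)}⋯Qₙ^{(x)} is the sequential sweep of the pinned (n−1)-partite complex (Ω_x, π^{(x)}). -/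

import Mathlib

open Finset
open scoped Classical

noncomputable section

namespace PaperFormal

/-- A weighted `n`-partite simplicial complex: a nonempty finite set `Ω` of `n`-tuples
(the top faces, each tuple picking one element from each side `U i`) together with a
full-support probability distribution `π` on it. -/
structure WPC (n : ℕ) (U : Fin n → Type*) [∀ i, Fintype (U i)] [∀ i, DecidableEq (U i)] where
  Ω : Finset (∀ i, U i)
  nonempty : Ω.Nonempty
  π : (∀ i, U i) → ℝ
  nonneg : ∀ ω, 0 ≤ π ω
  support : ∀ ω, 0 < π ω ↔ ω ∈ Ω
  sum_one : ∑ ω : ∀ i, U i, π ω = 1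

/-- Partial assignments to the coordinates in `S`. -/
abbrev PAssign {n : ℕ} (U : Fin n → Type*) (S : Finset (Fin n)) : Type _ :=
  ∀ i : {x : Fin n // x ∈ S}, U i.1

variable {n : ℕ} {U : Fin n → Type*} [∀ i, Fintype (U i)] [∀ i, DecidableEq (U i)]

/-- Restriction of a tuple to the coordinates in `S`. -/
def restr (S : Finset (Fin n)) (ω : ∀ i, U i) : PAssign U S := fun i => ω i.1

/-- The unique assignment to the empty set of coordinates. -/
def emptyA : PAssign U (∅ : Finset (Fin n)) := fun i => absurd i.2 (Finset.notMem_empty i.1)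

/-- Probability of the event `E` under `π`. -/
def pr (X : WPC n U) (E : (∀ i, U i) → Prop) : ℝ :=
  ∑ ω : ∀ i, U i, if E ω then X.π ω else 0

lemma pr_congr (X : WPC n U) {E F : (∀ i, U i) → Prop} (h : ∀ ω, E ω ↔ F ω) :
    pr X E = pr X F :=
  Finset.sum_congr rfl fun ω _ => if_congr (h ω) rfl rfl

/-- The `S`-marginal of `π`, evaluated at the partial assignment `α`. -/
def marg (X : WPC n U) (S : Finset (Fin n)) (α : PAssign U S) : ℝ :=
  pr X fun ω => restr S ω = α

/-- The pinned marginal `π_T^{(α)}`: the probability that the coordinates in `T` agree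
with `β`, conditioned on the coordinates in `S` agreeing with `α`. -/
def cmarg (X : WPC n U) {S T : Finset (Fin n)} (α : PAssign U S) (β : PAssign U T) : ℝ :=
  pr X (fun ω => restr S ω = α ∧ restr T ω = β) / marg X S α

/-- The colored random walk `C_α^{I → J}`: entry `(τI, τJ)` is
`Pr[ω_J = τJ | ω_I = τI, ω_S = α]`. -/
def Cwalk (X : WPC n U) (S I J : Finset (Fin n)) (α : PAssign U S)
    (τI : PAssign U I) (τJ : PAssign U J) : ℝ :=
  pr X (fun ω => restr S ω = α ∧ restr I ω = τI ∧ restr J ω = τJ) /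
    pr X (fun ω => restr S ω = α ∧ restr I ω = τI)

/-- The second largest singular value of a row-stochastic matrix `M` satisfying
`μA M = μB`, with respect to the inner products weighted by `μA` and `μB`, via its
variational characterization
`σ₂(M) = sup { ⟨f, M g⟩_{μA} : ⟨f,1⟩_{μA} = ⟨g,1⟩_{μB} = 0, ‖f‖_{μA} = ‖g‖_{μB} = 1 }`. -/
def sigma2 {A B : Type*} [Fintype A] [Fintype B]
    (μA : A → ℝ) (μB : B → ℝ) (M : A → B → ℝ) : ℝ :=
  sSup { r : ℝ | ∃ f : A → ℝ, ∃ g : B → ℝ,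
    (∑ a, μA a * f a) = 0 ∧ (∑ b, μB b * g b) = 0 ∧
    (∑ a, μA a * f a ^ 2) = 1 ∧ (∑ b, μB b * g b ^ 2) = 1 ∧
    r = ∑ a, μA a * f a * ∑ b, M a b * g b }

/-- The second largest singular value `σ₂(C_α^{I → J})`, with respect to the inner
products weighted by the pinned marginals `π_I^{(α)}` and `π_J^{(α)}`. -/
def sigma2C (X : WPC n U) (S I J : Finset (Fin n)) (α : PAssign U S) : ℝ :=
  sigma2 (fun τI : PAssign U I => cmarg X α τI) (fun τJ : PAssign U J => cmarg X α τJ)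
    (Cwalk X S I J α)

/-- `ε^{I → J}`: the maximum of `σ₂(C_α^{I → J})` over all partial assignments `α`
to the coordinates outside `I ∪ J` (realizable on `Ω`). -/
def epsIJ (X : WPC n U) (I J : Finset (Fin n)) : ℝ :=
  sSup { r : ℝ | ∃ α : PAssign U (I ∪ J)ᶜ,
    0 < marg X (I ∪ J)ᶜ α ∧ r = sigma2C X (I ∪ J)ᶜ I J α }

/-- `π` is `(ε 0, …, ε (n-2))`-product: for every realizable pinning `α` of a set `S` of at
most `n - 2` coordinates, and all distinct `i, j ∉ S`, `σ₂(C_α^{i → j}) ≤ ε |S|`. -/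
def isProduct (X : WPC n U) (ε : ℕ → ℝ) : Prop :=
  ∀ S : Finset (Fin n), S.card ≤ n - 2 → ∀ α : PAssign U S, 0 < marg X S α →
    ∀ i j : Fin n, i ∉ S → j ∉ S → i ≠ j → sigma2C X S {i} {j} α ≤ ε S.card

/-- The update operator `Q_i`: resample the `i`-th coordinate according to `π`,
conditionally on all the other coordinates. -/
def Qmat (X : WPC n U) (i : Fin n) : Matrix (∀ i, U i) (∀ i, U i) ℝ :=
  Matrix.of fun ω ω' =>
    pr X (fun τ => τ = ω' ∧ restr {i}ᶜ τ = restr {i}ᶜ ω) /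
      pr X (fun τ => restr {i}ᶜ τ = restr {i}ᶜ ω)

/-- The sequential sweep `P_seq^{(s)} = Q_{s 0} Q_{s 1} ⋯ Q_{s (n-1)}`. -/
def Psq (X : WPC n U) (s : Equiv.Perm (Fin n)) : Matrix (∀ i, U i) (∀ i, U i) ℝ :=
  (List.ofFn fun j : Fin n => Qmat X (s j)).prod

/-- The second largest singular value of the sequential sweep, with respect to the
inner product weighted by its stationary distribution `π`. -/
def sigma2P (X : WPC n U) (s : Equiv.Perm (Fin n)) : ℝ :=
  sigma2 X.π X.π fun ω ω' => Psq X s ω ω'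

/-- The link graph `G_α` of a pinning `α` of the coordinates in `S`: vertices are pairs
`(i, x)` with `i ∉ S`, and `(i,x)`, `(j,y)` are adjacent when `i ≠ j` and the event
`{ω_i = x, ω_j = y, ω_S = α}` has positive probability. -/
def linkGraph (X : WPC n U) (S : Finset (Fin n)) (α : PAssign U S) :
    SimpleGraph ((i : Fin n) × U i) where
  Adj v w := v.1 ≠ w.1 ∧ v.1 ∉ S ∧ w.1 ∉ S ∧
    0 < pr X fun ω => restr S ω = α ∧ ω v.1 = v.2 ∧ ω w.1 = w.2
  symm := by
    constructor
    rintro v w ⟨h1, h2, h3, h4⟩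
    refine ⟨h1.symm, h3, h2, ?_⟩
    have e : pr X (fun ω => restr S ω = α ∧ ω w.1 = w.2 ∧ ω v.1 = v.2)
        = pr X (fun ω => restr S ω = α ∧ ω v.1 = v.2 ∧ ω w.1 = w.2) :=
      pr_congr X fun ω => by tauto
    rw [e]; exact h4
  loopless := ⟨by rintro v ⟨h1, -⟩; exact h1 rfl⟩

/-- `(X, π)` is link-connected: in every link graph (of a realizable pinning of at most
`n - 2` coordinates), every two valid vertices are connected by a path. -/
def linkConnected (X : WPC n U) : Prop :=
  ∀ S : Finset (Fin n), S.card ≤ n - 2 → ∀ α : PAssign U S, 0 < marg X S α →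
    ∀ v w : (i : Fin n) × U i, v.1 ∉ S → w.1 ∉ S →
      0 < pr X (fun ω => restr S ω = α ∧ ω v.1 = v.2) →
      0 < pr X (fun ω => restr S ω = α ∧ ω w.1 = w.2) →
      (linkGraph X S α).Reachable v w

/-- The stationary measure of the random walk on the link graph `G_α`. -/
def linkMeas (X : WPC n U) (S : Finset (Fin n)) (α : PAssign U S) :
    (i : Fin n) × U i → ℝ :=
  fun v => if v.1 ∈ S then 0 else
    (1 / ((n : ℝ) - (S.card : ℝ))) *
      (pr X (fun ω => restr S ω = α ∧ ω v.1 = v.2) / marg X S α)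

/-- The random walk matrix `M_α` of the link graph `G_α`. -/
def linkWalk (X : WPC n U) (S : Finset (Fin n)) (α : PAssign U S) :
    (i : Fin n) × U i → (i : Fin n) × U i → ℝ :=
  fun v w =>
    if v.1 = w.1 ∨ v.1 ∈ S ∨ w.1 ∈ S then 0 else
      (1 / ((n : ℝ) - (S.card : ℝ) - 1)) *
        (pr X (fun ω => restr S ω = α ∧ ω v.1 = v.2 ∧ ω w.1 = w.2) /
          pr X (fun ω => restr S ω = α ∧ ω v.1 = v.2))

/-- The second largest eigenvalue of a random walk matrix `M`, self-adjoint with respect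
to the probability measure `μ`, via its variational characterization. -/
def lambda2 {A : Type*} [Fintype A] (μ : A → ℝ) (M : A → A → ℝ) : ℝ :=
  sSup { r : ℝ | ∃ f : A → ℝ,
    (∑ a, μ a * f a) = 0 ∧ (∑ a, μ a * f a ^ 2) = 1 ∧
    r = ∑ a, μ a * f a * ∑ b, M a b * f b }

/-- `(X, π)` is a `(γ 0, …, γ (n-2))`-local spectral expander:
`λ₂(M_α) ≤ γ |S|` for every realizable pinning `α` of at most `n - 2` coordinates. -/
def isLocalExpander (X : WPC n U) (γ : ℕ → ℝ) : Prop :=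
  ∀ S : Finset (Fin n), S.card ≤ n - 2 → ∀ α : PAssign U S, 0 < marg X S α →
    lambda2 (linkMeas X S α) (linkWalk X S α) ≤ γ S.card

/-- Kullback–Leibler divergence `D(μ ‖ ν) = Σ_a μ(a) log (μ(a) / ν(a))`. -/
def KL {A : Type*} [Fintype A] (μ ν : A → ℝ) : ℝ :=
  ∑ a, μ a * Real.log (μ a / ν a)

/-- `μ` is a probability distribution supported on `{a | P a}`. -/
def distOn {A : Type*} [Fintype A] (P : A → Prop) (μ : A → ℝ) : Prop :=
  (∀ a, 0 ≤ μ a) ∧ (∑ a, μ a) = 1 ∧ ∀ a, ¬ P a → μ a = 0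

/-- The `(I, J)` entropy contraction parameter `η^{I → J} = 1 - κ^{I → J}`, where
`κ^{I → J}` is the supremum of `D(μ C_α^{I→J} ‖ π_J^{(α)}) / D(μ ‖ π_I^{(α)})` over all
realizable pinnings `α` of the coordinates outside `I ∪ J` and all distributions `μ` on
the assignments of `I` compatible with `α`. -/
def etaIJ (X : WPC n U) (I J : Finset (Fin n)) : ℝ :=
  1 - sSup { r : ℝ | ∃ α : PAssign U (I ∪ J)ᶜ, 0 < marg X (I ∪ J)ᶜ α ∧
    ∃ μ : PAssign U I → ℝ,
      distOn (fun τ => 0 < pr X fun ω => restr (I ∪ J)ᶜ ω = α ∧ restr I ω = τ) μ ∧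
      KL μ (fun τ : PAssign U I => cmarg X α τ) ≠ 0 ∧
      r = KL (fun τJ : PAssign U J => ∑ τI : PAssign U I, μ τI * Cwalk X (I ∪ J)ᶜ I J α τI τJ)
            (fun τJ : PAssign U J => cmarg X α τJ) /
          KL μ (fun τ : PAssign U I => cmarg X α τ) }

/-- The entropy contraction factor `EC(M) = 1 - sup_μ D(μ M ‖ π) / D(μ ‖ π)` of a random
walk matrix `M` with stationary distribution `π`. -/
def EC (X : WPC n U) (M : Matrix (∀ i, U i) (∀ i, U i) ℝ) : ℝ :=
  1 - sSup { r : ℝ | ∃ μ : (∀ i, U i) → ℝ, distOn (fun ω => ω ∈ X.Ω) μ ∧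
    KL μ X.π ≠ 0 ∧ r = KL (Matrix.vecMul μ M) X.π / KL μ X.π }

/-- The `π`-weighted inner product on `ℝ^Ω`. -/
def ip (X : WPC n U) (f g : {ω // ω ∈ X.Ω} → ℝ) : ℝ :=
  ∑ ω : {ω // ω ∈ X.Ω}, X.π ω.1 * f ω * g ω

/-- The indicator vector `u_α ∈ ℝ^Ω` of the partial assignment `α` to the coordinates
outside `T`. -/
def uvec (X : WPC n U) (T : Finset (Fin n)) (α : PAssign U Tᶜ) : {ω // ω ∈ X.Ω} → ℝ :=
  fun ω => if restr Tᶜ ω.1 = α then 1 else 0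

/-- The subspace `U_T = span { u_α : α an assignment to the coordinates outside T }`. -/
def Uspan (X : WPC n U) (T : Finset (Fin n)) : Submodule ℝ ({ω // ω ∈ X.Ω} → ℝ) :=
  Submodule.span ℝ { f | ∃ α : PAssign U Tᶜ, f = uvec X T α }

/-- The subspace of functions on `Ω` depending only on the coordinates outside `T`. -/
def Uinv (X : WPC n U) (T : Finset (Fin n)) : Submodule ℝ ({ω // ω ∈ X.Ω} → ℝ) where
  carrier := { f | ∀ ω ω' : {ω // ω ∈ X.Ω}, restr Tᶜ ω.1 = restr Tᶜ ω'.1 → f ω = f ω' }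
  add_mem' := by
    intro f g hf hg ω ω' h
    simp only [Pi.add_apply, hf ω ω' h, hg ω ω' h]
  zero_mem' := by intro ω ω' h; rfl
  smul_mem' := by
    intro c f hf ω ω' h
    simp only [Pi.smul_apply, hf ω ω' h]

/-- The orthogonal complement (with respect to `⟨·,·⟩_π`) of a subspace, as a set. -/
def orthC (X : WPC n U) (W : Submodule ℝ ({ω // ω ∈ X.Ω} → ℝ)) :
    Set ({ω // ω ∈ X.Ω} → ℝ) :=
  { f | ∀ g ∈ W, ip X f g = 0 }

/-- The cosine of the angle between two subspaces of `ℝ^Ω`: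
`cos(A,B) = sup { ⟨u,v⟩_π : u ∈ A ∩ (A ⊓ B)ᗮ, v ∈ B ∩ (A ⊓ B)ᗮ, ‖u‖_π = ‖v‖_π = 1 }`. -/
def cosAngle (X : WPC n U) (A B : Submodule ℝ ({ω // ω ∈ X.Ω} → ℝ)) : ℝ :=
  sSup { r : ℝ | ∃ u, u ∈ A ∧ u ∈ orthC X (A ⊓ B) ∧
    ∃ v, v ∈ B ∧ v ∈ orthC X (A ⊓ B) ∧
    ip X u u = 1 ∧ ip X v v = 1 ∧ r = ip X u v }

/-- The update operator `Q_i` as an operator on `ℝ^Ω`. -/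
def Qop (X : WPC n U) (i : Fin n) (f : {ω // ω ∈ X.Ω} → ℝ) : {ω // ω ∈ X.Ω} → ℝ :=
  fun ω => ∑ ω' : {ω // ω ∈ X.Ω}, Qmat X i ω.1 ω'.1 * f ω'

/-- Concatenation of partial assignments on disjoint coordinate sets. -/
def joinAssign {S T : Finset (Fin n)} (β : PAssign U S) (α : PAssign U T) :
    PAssign U (S ∪ T) :=
  fun i => if h : i.1 ∈ S then β ⟨i.1, h⟩
    else α ⟨i.1, (Finset.mem_union.mp i.2).resolve_left h⟩

/-- The `S`-marginal of a (not necessarily normalized) distribution `ν` on tuples. -/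
def distMarg (ν : (∀ i, U i) → ℝ) (S : Finset (Fin n)) (a : PAssign U S) : ℝ :=
  ∑ ω : ∀ i, U i, if restr S ω = a then ν ω else 0

/-- The distribution `ν` conditioned on the `i`-th coordinate being `x`. -/
def condAt (ν : (∀ i, U i) → ℝ) (i : Fin n) (x : U i) : (∀ i, U i) → ℝ :=
  fun ω => if ω i = x then ν ω / (∑ ω' : ∀ i, U i, if ω' i = x then ν ω' else 0) else 0

/-- The influence matrix `Inf_α` of the pinning `α` of the coordinates in `S`:
`Inf_α((i,x),(j,y)) = Pr[ω_j = y | ω_i = x, ω_S = α] - Pr[ω_j = y | ω_S = α]`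
for `i ≠ j` outside `S`, and `0` otherwise. -/
def InfMat (X : WPC n U) (S : Finset (Fin n)) (α : PAssign U S) :
    Matrix ((i : Fin n) × U i) ((i : Fin n) × U i) ℝ :=
  Matrix.of fun v w =>
    if v.1 = w.1 ∨ v.1 ∈ S ∨ w.1 ∈ S then 0 else
      pr X (fun ω => restr S ω = α ∧ ω v.1 = v.2 ∧ ω w.1 = w.2) /
          pr X (fun ω => restr S ω = α ∧ ω v.1 = v.2) -
        pr X (fun ω => restr S ω = α ∧ ω w.1 = w.2) / marg X S α

/-- `π` is `(c 0, …, c (n-2))`-spectrally independent: every (real) eigenvalue of the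
influence matrix of a realizable pinning of at most `n - 2` coordinates is at most
`c |S|`. -/
def spectrallyIndependent (X : WPC n U) (c : ℕ → ℝ) : Prop :=
  ∀ S : Finset (Fin n), S.card ≤ n - 2 → ∀ α : PAssign U S, 0 < marg X S α →
    ∀ r : ℝ,
      (∃ v : ((i : Fin n) × U i) → ℝ, v ≠ 0 ∧ (InfMat X S α).mulVec v = r • v) →
      r ≤ c S.card

end PaperFormal

namespace PaperFormal

variable {n : ℕ} {U : Fin n → Type*} [∀ i, Fintype (U i)] [∀ i, DecidableEq (U i)]

/-
The operators `Q₂, …, Qₙ` never change the first coordinate and are stochastic on the support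
of `π`, and both properties pass to their product `M = Q₂ ⋯ Qₙ`. Conditioning on `ω₁ = x` is
restriction to the fiber `{ω₁ = x}` followed by normalisation. Restriction commutes with a
fiber-preserving `M`, and the normaliser does not change, because `ν = μ Q₁` lives on the support
of `π`, where `M` preserves total mass. As `Psq = Q₁ M`, this is `(ν M)^{(x)} = ν^{(x)} M`.
-/

open Matrix

section Matrices

variable {α β : Type*} [Fintype α]

lemma exists_ne_zero_of_vecMul_apply_ne_zero {v : α → ℝ} {M : Matrix α α ℝ} {b : α}
    (h : (v ᵥ* M) b ≠ 0) : ∃ a, v a ≠ 0 ∧ M a b ≠ 0 := by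
  obtain ⟨a, -, ha⟩ := Finset.exists_ne_zero_of_sum_ne_zero h
  exact ⟨a, left_ne_zero_of_mul ha, right_ne_zero_of_mul ha⟩

lemma sum_vecMul_eq_sum {v : α → ℝ} {M : Matrix α α ℝ}
    (hM : ∀ a, v a ≠ 0 → ∑ b, M a b = 1) : ∑ b, (v ᵥ* M) b = ∑ a, v a := by
  simp only [vecMul, dotProduct]
  rw [Finset.sum_comm]
  refine Finset.sum_congr rfl fun a _ => ?_
  by_cases ha : v a = 0
  · simp [ha]
  · rw [← Finset.mul_sum, hM a ha, mul_one]

variable [DecidableEq α]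

def fiberPreserving (f : α → β) : Submonoid (Matrix α α ℝ) where
  carrier := {M | ∀ a b, M a b ≠ 0 → f a = f b}
  one_mem' a b h := by
    by_contra hab
    exact h (one_apply_ne fun hab' => hab (congrArg f hab'))
  mul_mem' {M N} hM hN a c h := by
    rw [mul_apply_eq_vecMul] at h
    obtain ⟨b, hab, hbc⟩ := exists_ne_zero_of_vecMul_apply_ne_zero h
    exact (hM a b hab).trans (hN b c hbc)

def stochasticOn (S : Set α) : Submonoid (Matrix α α ℝ) where
  carrier := {M | ∀ a ∈ S, ∑ b, M a b = 1 ∧ ∀ b, M a b ≠ 0 → b ∈ S}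
  one_mem' a ha := by
    refine ⟨by simp [one_apply], fun b h => ?_⟩
    by_cases hab : a = b
    · rwa [← hab]
    · exact absurd (one_apply_ne hab) h
  mul_mem' {M N} hM hN a ha := by
    simp only [mul_apply_eq_vecMul]
    refine ⟨?_, fun c h => ?_⟩
    · rw [sum_vecMul_eq_sum fun b hb => (hN b ((hM a ha).2 b hb)).1, (hM a ha).1]
    · obtain ⟨b, hab, hbc⟩ := exists_ne_zero_of_vecMul_apply_ne_zero h
      exact (hN b ((hM a ha).2 b hab)).2 c hbc

lemma indicator_vecMul_of_mem_fiberPreserving {f : α → β} {M : Matrix α α ℝ}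
    (hM : M ∈ fiberPreserving f) (v : α → ℝ) (y : β) :
    (f ⁻¹' {y}).indicator (v ᵥ* M) = (f ⁻¹' {y}).indicator v ᵥ* M := by
  have hzero : ∀ a b, f a ≠ f b → M a b = 0 := fun a b hab => by
    by_contra h
    exact hab (hM a b h)
  ext b
  simp only [Set.indicator_apply, Set.mem_preimage, Set.mem_singleton_iff, vecMul,
    dotProduct]
  split_ifs with hb
  · refine Finset.sum_congr rfl fun a _ => ?_
    split_ifs with ha
    · rfl
    · rw [hzero a b (by rwa [hb]), mul_zero, zero_mul]
  · refine (Finset.sum_eq_zero fun a _ => ?_).symm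
    split_ifs with ha
    · rw [hzero a b (by rw [ha]; exact Ne.symm hb), mul_zero]
    · rw [zero_mul]

end Matrices

lemma condAt_eq_smul_indicator (ν : (∀ i, U i) → ℝ) (i : Fin n) (x : U i) :
    condAt ν i x = (∑ ω, ((· i) ⁻¹' {x}).indicator ν ω)⁻¹ • ((· i) ⁻¹' {x}).indicator ν := by
  ext ω
  simp only [condAt, Set.indicator_apply, Set.mem_preimage, Set.mem_singleton_iff,
    Pi.smul_apply, smul_eq_mul]
  split_ifs <;> simp [div_eq_inv_mul]

lemma condAt_vecMul {i : Fin n} (x : U i) {ν : (∀ i, U i) → ℝ}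
    {M : Matrix (∀ i, U i) (∀ i, U i) ℝ} (hM : M ∈ fiberPreserving fun ω : ∀ i, U i => ω i)
    (hrow : ∀ ω, ν ω ≠ 0 → ∑ ω', M ω ω' = 1) :
    condAt (ν ᵥ* M) i x = condAt ν i x ᵥ* M := by
  have hrow' : ∀ ω, ((· i) ⁻¹' {x}).indicator ν ω ≠ 0 → ∑ ω', M ω ω' = 1 :=
    fun ω h => hrow ω (Set.indicator_apply_ne_zero.1 h).2
  rw [condAt_eq_smul_indicator, condAt_eq_smul_indicator, smul_vecMul,
    indicator_vecMul_of_mem_fiberPreserving hM, sum_vecMul_eq_sum hrow']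

lemma pr_eq_self_and (X : WPC n U) (ω : ∀ i, U i) (P : (∀ i, U i) → Prop) :
    pr X (fun τ => τ = ω ∧ P τ) = if P ω then X.π ω else 0 := by
  rw [pr, Finset.sum_eq_single ω (fun τ _ hτ => by simp [hτ]) (by simp)]
  simp

lemma pr_pos_of_mem {X : WPC n U} {E : (∀ i, U i) → Prop} {ω : ∀ i, U i}
    (hE : E ω) (hω : 0 < X.π ω) : 0 < pr X E :=
  hω.trans_le <| by
    simpa [pr, hE] using Finset.single_le_sum (f := fun τ => if E τ then X.π τ else 0)
      (fun τ _ => by split_ifs <;> simp [X.nonneg τ]) (Finset.mem_univ ω)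

lemma Qmat_apply_ne_zero {X : WPC n U} {j : Fin n} {ω τ : ∀ i, U i}
    (h : Qmat X j ω τ ≠ 0) : 0 < X.π τ ∧ restr {j}ᶜ τ = restr {j}ᶜ ω := by
  simp only [Qmat, of_apply, pr_eq_self_and] at h
  split_ifs at h with hτ
  · exact ⟨(X.nonneg τ).lt_of_ne' (left_ne_zero_of_mul h), hτ⟩
  · simp at h

lemma sum_Qmat_apply (X : WPC n U) (j : Fin n) {ω : ∀ i, U i} (hω : 0 < X.π ω) :
    ∑ τ, Qmat X j ω τ = 1 := by
  simp only [Qmat, of_apply, ← Finset.sum_div, pr_eq_self_and]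
  exact div_self (pr_pos_of_mem (E := fun τ => restr {j}ᶜ τ = restr {j}ᶜ ω) rfl hω).ne'

lemma Qmat_mem_fiberPreserving (X : WPC n U) {i j : Fin n} (hj : j ≠ i) :
    Qmat X j ∈ fiberPreserving fun ω : ∀ i, U i => ω i := fun _ _ h =>
  (congrFun (Qmat_apply_ne_zero h).2 ⟨i, by simpa using hj.symm⟩).symm

lemma Qmat_mem_stochasticOn (X : WPC n U) (j : Fin n) :
    Qmat X j ∈ stochasticOn {ω | 0 < X.π ω} := fun _ hω =>
  ⟨sum_Qmat_apply X j hω, fun _ h => (Qmat_apply_ne_zero h).1⟩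

lemma pos_of_vecMul_Qmat_ne_zero {X : WPC n U} {j : Fin n} {μ : (∀ i, U i) → ℝ}
    {ω : ∀ i, U i} (h : (μ ᵥ* Qmat X j) ω ≠ 0) : 0 < X.π ω :=
  have ⟨_, _, hQ⟩ := exists_ne_zero_of_vecMul_apply_ne_zero h
  (Qmat_apply_ne_zero hQ).1

lemma Psq_one_eq_mul_tail (X : WPC n U) {i0 : Fin n} (hi0 : (i0 : ℕ) = 0) :
    Psq X 1 = Qmat X i0 * (List.ofFn fun j : Fin n => Qmat X j).tail.prod := by
  obtain ⟨k, rfl⟩ := Nat.exists_eq_succ_of_ne_zero i0.pos.ne'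
  obtain rfl : i0 = 0 := Fin.ext hi0
  simp [Psq, List.ofFn_succ]

lemma tail_prod_Qmat_mem_inf (X : WPC n U) {i0 : Fin n} (hi0 : (i0 : ℕ) = 0) :
    (List.ofFn fun j : Fin n => Qmat X j).tail.prod ∈
      fiberPreserving (fun ω : ∀ i, U i => ω i0) ⊓ stochasticOn {ω | 0 < X.π ω} := by
  obtain ⟨k, rfl⟩ := Nat.exists_eq_succ_of_ne_zero i0.pos.ne'
  obtain rfl : i0 = 0 := Fin.ext hi0
  rw [List.ofFn_succ, List.tail_cons]
  refine list_prod_mem fun M hM => ?_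
  obtain ⟨j, rfl⟩ := List.mem_ofFn.1 hM
  exact ⟨Qmat_mem_fiberPreserving X (Fin.succ_ne_zero j), Qmat_mem_stochasticOn X _⟩

theorem pinned_seq_sweep_general
    (X : WPC n U) (i0 : Fin n) (hi0 : (i0 : ℕ) = 0)
    (μ : (∀ i, U i) → ℝ)
    (x : U i0) :
    condAt (Matrix.vecMul μ (Psq X 1)) i0 x =
      Matrix.vecMul (condAt (Matrix.vecMul μ (Qmat X i0)) i0 x)
        ((List.ofFn fun j : Fin n => Qmat X j).tail.prod) := by
  obtain ⟨hfib, hstoch⟩ := tail_prod_Qmat_mem_inf X hi0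
  rw [Psq_one_eq_mul_tail X hi0, ← vecMul_vecMul]
  exact condAt_vecMul x hfib fun ω hω => (hstoch ω (pos_of_vecMul_Qmat_ne_zero hω)).1

theorem pinned_seq_sweep
    (hn : 2 ≤ n) (X : WPC n U) (i0 : Fin n) (hi0 : (i0 : ℕ) = 0)
    (μ : (∀ i, U i) → ℝ) (hμ : distOn (fun ω => ω ∈ X.Ω) μ)
    (x : U i0)
    (hx : 0 < ∑ ω : ∀ i, U i,
      if ω i0 = x then Matrix.vecMul μ (Qmat X i0) ω else 0) :
    condAt (Matrix.vecMul μ (Psq X 1)) i0 x =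
      Matrix.vecMul (condAt (Matrix.vecMul μ (Qmat X i0)) i0 x)
        ((List.ofFn fun j : Fin n => Qmat X j).tail.prod) :=
  pinned_seq_sweep_general X i0 hi0 μ x

end PaperFormal
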